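/- With the same setting (polynomial growth group G of exponent D, periodic metric with δ-annular decay, strong Følner exhaustion sequence of closed balls closure(B_{r_n}), g ∈ D_{π,w_α} with α > 0), if Λ ⊆ G is such that {π(λ)g}_{λ∈Λ} is a Riesz sequence in H_π, then there exist C > 0 and N such that for all n ≥ N, sup_{x∈G} #(Λ ∩ x·closure(B_{r_n})) ≤ d_π (1 + C r_n^{−αδ/(δ+α)}) μ(closure(B_{r_n})). -/

import Mathlib

/-!
Let `K_ρ = closure B_ρ`, let `S ⊆ Λ ∩ x · K_ρ` be finite and `V = span {π λ g : λ ∈ S}`. The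
lower Riesz bound makes `dim V = #S`, so the orthogonality relations give
`∫ ‖P_V (π y g)‖² dμ(y) = #S · d_π⁻¹ ‖g‖²`. Split this integral at the enlarged ball
`E = x · K_{ρ + r₀ + σ}`. On `E` the integrand is at most `‖g‖²`. Off `E` the dual Riesz bound
`‖P_V w‖² ≤ A⁻¹ ∑_{λ ∈ S} |⟪π λ g, w⟫|²` reduces it to the tail of the coefficient `⟪g, π · g⟫`
outside the ball of radius `σ`, which the weight `(1 + d)^α` makes `O(σ^(-α))`. Annular decay
gives `μ E ≤ (1 + O((σ / ρ)^δ)) μ K_ρ`, and `σ = ρ^(δ/(δ+α))` balances the two errors at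
`ρ^(-αδ/(δ+α))`.
-/

open MeasureTheory Pointwise Filter Topology
open scoped InnerProductSpace

theorem le_one_add_two_mul_of_le_add_mul {a b t : ℝ} (ha : 0 ≤ a) (ht : 0 ≤ t) (ht2 : t ≤ 1 / 2)
    (h : a ≤ b + t * a) : a ≤ (1 + 2 * t) * b := by
  nlinarith [mul_nonneg (mul_nonneg ht ha) (by linarith : 0 ≤ 1 - 2 * t)]

theorem annulus_ratio_rpow_le {ρ α δ a : ℝ} (hρ : 1 ≤ ρ) (hα : 0 < α) (hδ : 0 < δ)
    (ha : 0 ≤ a) :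
    ((ρ ^ (δ / (δ + α)) + a) / (ρ + ρ ^ (δ / (δ + α)) + a)) ^ δ
      ≤ (1 + a) ^ δ * ρ ^ (-(α * δ / (δ + α))) := by
  have hρ0 : 0 < ρ := by linarith
  have hσ : 1 ≤ ρ ^ (δ / (δ + α)) := Real.one_le_rpow hρ (by positivity)
  have hbase : (ρ ^ (δ / (δ + α)) + a) / (ρ + ρ ^ (δ / (δ + α)) + a)
      ≤ (1 + a) * ρ ^ (δ / (δ + α) - 1) := by
    rw [Real.rpow_sub hρ0, Real.rpow_one, mul_div_assoc']
    gcongr ?_ / ?_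
    · nlinarith [mul_le_mul_of_nonneg_left hσ ha]
    · linarith
  have hexp : -(α * δ / (δ + α)) = (δ / (δ + α) - 1) * δ := by field_simp; ring
  rw [hexp, Real.rpow_mul hρ0.le, ← Real.mul_rpow (by linarith) (by positivity)]
  gcongr

theorem one_add_rpow_rpow_neg_le {ρ α δ : ℝ} (hρ : 0 < ρ) (hα : 0 ≤ α) :
    (1 + ρ ^ (δ / (δ + α))) ^ (-α) ≤ ρ ^ (-(α * δ / (δ + α))) := by
  calc (1 + ρ ^ (δ / (δ + α))) ^ (-α) ≤ (ρ ^ (δ / (δ + α))) ^ (-α) :=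
        Real.rpow_le_rpow_of_nonpos (by positivity) (by linarith) (by linarith)
    _ = ρ ^ (-(α * δ / (δ + α))) := by rw [← Real.rpow_mul hρ.le]; congr 1; ring

theorem tendsto_atTop_of_lt_sub {r : ℕ → ℝ} {r₀ : ℝ} (hr₀ : 0 < r₀)
    (h : ∀ n, r₀ < r (n + 1) - r n) : Tendsto r atTop atTop := by
  have hlin (n : ℕ) : r 0 + n * r₀ ≤ r n := by
    induction n with
    | zero => simp
    | succ k ih => push_cast; linarith [h k]
  refine tendsto_atTop_mono hlin (tendsto_atTop_add_const_left _ _ ?_)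
  exact tendsto_natCast_atTop_atTop.atTop_mul_const hr₀

theorem Set.finite_and_ncard_le_of_forall_finset_card_le {α : Type*} {s : Set α} {b : ℝ}
    (h : ∀ T : Finset α, ↑T ⊆ s → (T.card : ℝ) ≤ b) : s.Finite ∧ (s.ncard : ℝ) ≤ b := by
  have hfin : s.Finite := by
    by_contra hinf
    obtain ⟨T, hT, hcard⟩ := Set.Infinite.exists_subset_card_eq hinf (⌊b⌋₊ + 1)
    have := h T hT
    rw [hcard] at this
    push_cast at this
    linarith [Nat.lt_floor_add_one b]
  refine ⟨hfin, ?_⟩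
  rw [Set.ncard_eq_toFinset_card s hfin]
  exact h _ (by simp)

theorem measure_real_le_of_annularDecay {X : Type*} [MeasurableSpace X] {μ : Measure X}
    {ℓ : X → ℝ} {c δ : ℝ}
    (hAD : ∀ r : ℝ, 1 ≤ r → ∀ s : ℝ, 0 < s → s ≤ r →
      μ ({x | ℓ x < r} \ {x | ℓ x < r - s}) ≤ ENNReal.ofReal (c * (s / r) ^ δ) * μ {x | ℓ x < r})
    {r s : ℝ} (hr : 1 ≤ r) (hs : 0 < s) (hsr : s ≤ r) (hfin : μ {x | ℓ x < r} ≠ ⊤)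
    (hθ0 : 0 ≤ c * (s / r) ^ δ) (hθ : c * (s / r) ^ δ ≤ 1 / 2) :
    μ.real {x | ℓ x < r} ≤ (1 + 2 * (c * (s / r) ^ δ)) * μ.real {x | ℓ x < r - s} := by
  have hsub : {x | ℓ x < r - s} ⊆ {x | ℓ x < r} :=
    fun x (hx : ℓ x < r - s) => show ℓ x < r by linarith
  have h : μ {x | ℓ x < r} ≤ μ {x | ℓ x < r - s}
      + ENNReal.ofReal (c * (s / r) ^ δ) * μ {x | ℓ x < r} :=
    (measure_le_inter_add_sdiff μ _ {x | ℓ x < r - s}).trans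
      (add_le_add (measure_mono Set.inter_subset_right) (hAD r hr s hs hsr))
  have hfin' := measure_ne_top_of_subset hsub hfin
  have hreal := ENNReal.toReal_mono (by finiteness) h
  rw [ENNReal.toReal_add hfin' (by finiteness),
    ENNReal.toReal_mul, ENNReal.toReal_ofReal hθ0] at hreal
  exact le_one_add_two_mul_of_le_add_mul measureReal_nonneg hθ0 hθ hreal

theorem measure_closure_ne_top_of_tendsto {X : Type*} [TopologicalSpace X] [MeasurableSpace X]
    {μ : Measure X} [IsFiniteMeasureOnCompacts μ] {ℓ : X → ℝ} {r : ℕ → ℝ}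
    (hr : Tendsto r atTop atTop) (hK : ∀ n, IsCompact (closure {x | ℓ x < r n})) (t : ℝ) :
    μ (closure {x | ℓ x < t}) ≠ ⊤ := by
  obtain ⟨n, hn⟩ := (hr.eventually_ge_atTop t).exists
  refine measure_ne_top_of_subset (closure_mono fun x hx => ?_) (hK n).measure_lt_top.ne
  exact lt_of_lt_of_le hx hn

theorem setIntegral_le_rpow_neg_mul_lintegral {X : Type*} [MeasurableSpace X] {μ : Measure X}
    {f F w : X → ℝ} {T : Set X} {σ α : ℝ} (hT : MeasurableSet T)
    (hf : AEStronglyMeasurable f μ) (hf0 : ∀ z, 0 ≤ f z) (hσ : 0 ≤ σ) (hα : 0 ≤ α)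
    (hfF : ∀ z ∈ T, f z ≤ F z) (hw : ∀ z ∈ T, σ ≤ w z)
    (hfin : ∫⁻ z, ENNReal.ofReal (F z * (1 + w z) ^ α) ∂μ ≠ ⊤) :
    ∫ z in T, f z ∂μ
      ≤ (1 + σ) ^ (-α) * (∫⁻ z, ENNReal.ofReal (F z * (1 + w z) ^ α) ∂μ).toReal := by
  have hσ1 : 0 < 1 + σ := by linarith
  have hpoint : ∀ z ∈ T, ENNReal.ofReal (f z)
      ≤ ENNReal.ofReal ((1 + σ) ^ (-α)) * ENNReal.ofReal (F z * (1 + w z) ^ α) := by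
    intro z hz
    rw [← ENNReal.ofReal_mul (by positivity), Real.rpow_neg hσ1.le, inv_mul_eq_div]
    refine ENNReal.ofReal_le_ofReal ((le_div_iff₀ (by positivity)).2 ?_)
    gcongr
    · exact (hf0 z).trans (hfF z hz)
    · exact hfF z hz
    · exact hw z hz
  rw [integral_eq_lintegral_of_nonneg_ae (ae_of_all _ hf0) hf.restrict,
    ← ENNReal.toReal_ofReal (Real.rpow_nonneg hσ1.le (-α)), ← ENNReal.toReal_mul]
  refine ENNReal.toReal_mono (ENNReal.mul_ne_top ENNReal.ofReal_ne_top hfin) ?_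
  calc ∫⁻ z in T, ENNReal.ofReal (f z) ∂μ
      ≤ ∫⁻ z in T, ENNReal.ofReal ((1 + σ) ^ (-α)) * ENNReal.ofReal (F z * (1 + w z) ^ α) ∂μ :=
        setLIntegral_mono' hT hpoint
    _ ≤ _ := by
      rw [lintegral_const_mul' _ _ ENNReal.ofReal_ne_top]
      gcongr
      exact Measure.restrict_le_self

section RieszFamily

variable {E : Type*} [NormedAddCommGroup E] [InnerProductSpace ℂ E] {ι : Type*} [Fintype ι]
  {u : ι → E} {A : ℝ}

theorem riesz_lower_comp_injective {Λ : Type*} {v : Λ → E}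
    (h : ∀ cf : Λ →₀ ℂ, A * ∑ l ∈ cf.support, ‖cf l‖ ^ 2 ≤ ‖∑ l ∈ cf.support, cf l • v l‖ ^ 2)
    {j : ι → Λ} (hj : Function.Injective j) (c : ι → ℂ) :
    A * ∑ i, ‖c i‖ ^ 2 ≤ ‖∑ i, c i • v (j i)‖ ^ 2 := by
  have key := h (Finsupp.mapDomain j (Finsupp.equivFunOnFinite.symm c))
  change A * (Finsupp.mapDomain j _).sum (fun _ a => ‖a‖ ^ 2)
    ≤ ‖(Finsupp.mapDomain j _).sum (fun l a => a • v l)‖ ^ 2 at key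
  rwa [Finsupp.sum_mapDomain_index_inj hj, Finsupp.sum_mapDomain_index_inj hj,
    Finsupp.sum_fintype _ _ (by simp), Finsupp.sum_fintype _ _ (by simp)] at key

theorem linearIndependent_of_riesz_lower (hA : 0 < A)
    (h : ∀ c : ι → ℂ, A * ∑ i, ‖c i‖ ^ 2 ≤ ‖∑ i, c i • u i‖ ^ 2) :
    LinearIndependent ℂ u := by
  refine Fintype.linearIndependent_iff.2 fun c hc i => ?_
  have hsum : ∑ i, ‖c i‖ ^ 2 = 0 := by
    have := h c
    rw [hc, norm_zero, zero_pow two_ne_zero] at this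
    exact le_antisymm (nonpos_of_mul_nonpos_right this hA) (by positivity)
  simpa using (Finset.sum_eq_zero_iff_of_nonneg fun i _ => sq_nonneg ‖c i‖).1 hsum i
    (Finset.mem_univ i)

theorem norm_inner_sq_le_of_mem_span_of_riesz_lower (hA : 0 < A)
    (h : ∀ c : ι → ℂ, A * ∑ i, ‖c i‖ ^ 2 ≤ ‖∑ i, c i • u i‖ ^ 2)
    {v : E} (hv : v ∈ Submodule.span ℂ (Set.range u)) (w : E) :
    ‖⟪v, w⟫_ℂ‖ ^ 2 ≤ A⁻¹ * ‖v‖ ^ 2 * ∑ i, ‖⟪u i, w⟫_ℂ‖ ^ 2 := by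
  obtain ⟨c, rfl⟩ := (Submodule.mem_span_range_iff_exists_fun ℂ).1 hv
  have hc : ∑ i, ‖c i‖ ^ 2 ≤ A⁻¹ * ‖∑ i, c i • u i‖ ^ 2 := by
    rw [le_inv_mul_iff₀ hA]; exact h c
  calc ‖⟪∑ i, c i • u i, w⟫_ℂ‖ ^ 2
      ≤ (∑ i, ‖c i‖ * ‖⟪u i, w⟫_ℂ‖) ^ 2 := by
        gcongr
        rw [sum_inner]
        refine (norm_sum_le _ _).trans_eq (Finset.sum_congr rfl fun i _ => ?_)
        rw [inner_smul_left, norm_mul, RCLike.norm_conj]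
    _ ≤ (∑ i, ‖c i‖ ^ 2) * ∑ i, ‖⟪u i, w⟫_ℂ‖ ^ 2 := Finset.sum_mul_sq_le_sq_mul_sq _ _ _
    _ ≤ A⁻¹ * ‖∑ i, c i • u i‖ ^ 2 * ∑ i, ‖⟪u i, w⟫_ℂ‖ ^ 2 := by gcongr

theorem norm_orthogonalProjectionOnto_sq_le_of_riesz_lower (hA : 0 < A)
    (h : ∀ c : ι → ℂ, A * ∑ i, ‖c i‖ ^ 2 ≤ ‖∑ i, c i • u i‖ ^ 2)
    {V : Submodule ℂ E} [V.HasOrthogonalProjection] (hV : V ≤ Submodule.span ℂ (Set.range u))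
    (w : E) : ‖V.orthogonalProjectionOnto w‖ ^ 2 ≤ A⁻¹ * ∑ i, ‖⟪u i, w⟫_ℂ‖ ^ 2 := by
  set p := V.orthogonalProjectionOnto w
  have hp : ‖⟪(p : E), w⟫_ℂ‖ = ‖p‖ ^ 2 := by
    rw [← Submodule.inner_orthogonalProjectionOnto_eq_of_mem_left, inner_self_eq_norm_sq_to_K]
    simp
  have key := norm_inner_sq_le_of_mem_span_of_riesz_lower hA h (hV p.2) w
  rw [hp, ← Submodule.coe_norm] at key
  rcases (sq_nonneg ‖p‖).eq_or_lt with h0 | hpos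
  · rw [← h0]; positivity
  · nlinarith

theorem OrthonormalBasis.sum_sq_norm_inner_coe {V : Submodule ℂ E} [V.HasOrthogonalProjection]
    {κ : Type*} [Fintype κ] (b : OrthonormalBasis κ ℂ V) (w : E) :
    ∑ i, ‖⟪(b i : E), w⟫_ℂ‖ ^ 2 = ‖V.orthogonalProjectionOnto w‖ ^ 2 := by
  simp_rw [← b.sum_sq_norm_inner_right, Submodule.inner_orthogonalProjectionOnto_eq_of_mem_left]

theorem le_norm_sq_of_riesz_lower
    (hu : ∀ c : ι → ℂ, A * ∑ i, ‖c i‖ ^ 2 ≤ ‖∑ i, c i • u i‖ ^ 2) (i : ι) : A ≤ ‖u i‖ ^ 2 := by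
  classical
  simpa [Pi.single_apply, apply_ite (‖·‖ ^ 2)] using hu (Pi.single i 1)

end RieszFamily

section SquareIntegrable

variable {G H : Type*} [NormedAddCommGroup H] [InnerProductSpace ℂ H] {π : G → H →L[ℂ] H}
  [MeasurableSpace G] {μ : Measure G} {dπ : ℝ}

theorem integrable_norm_inner_sq (hdπ : dπ ≠ 0)
    (hortho : ∀ f h : H, ∫ x, ‖⟪f, π x h⟫_ℂ‖ ^ 2 ∂μ = dπ⁻¹ * ‖f‖ ^ 2 * ‖h‖ ^ 2) (f h : H) :
    Integrable (fun x => ‖⟪f, π x h⟫_ℂ‖ ^ 2) μ := by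
  by_contra hni
  have hzero := integral_undef hni
  rw [hortho] at hzero
  rcases eq_or_ne f 0 with rfl | hf
  · simp at hni
  rcases eq_or_ne h 0 with rfl | hh
  · simp at hni
  simp [hdπ, hf, hh] at hzero

theorem card_mul_le_of_riesz_lower (hπnorm : ∀ (x : G) (f : H), ‖π x f‖ = ‖f‖) (hdπ : dπ ≠ 0)
    (hortho : ∀ f h : H, ∫ x, ‖⟪f, π x h⟫_ℂ‖ ^ 2 ∂μ = dπ⁻¹ * ‖f‖ ^ 2 * ‖h‖ ^ 2) (g : H)
    {ι : Type*} [Fintype ι] {u : ι → H} {A : ℝ} (hA : 0 < A)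
    (hu : ∀ c : ι → ℂ, A * ∑ i, ‖c i‖ ^ 2 ≤ ‖∑ i, c i • u i‖ ^ 2)
    {E : Set G} (hE : MeasurableSet E) (hEfin : μ E ≠ ⊤) :
    Fintype.card ι * (dπ⁻¹ * ‖g‖ ^ 2)
      ≤ ‖g‖ ^ 2 * μ.real E + A⁻¹ * ∑ i, ∫ y in Eᶜ, ‖⟪u i, π y g⟫_ℂ‖ ^ 2 ∂μ := by
  set V := Submodule.span ℂ (Set.range u)
  have : FiniteDimensional ℂ V := .span_of_finite ℂ (Set.finite_range u)
  let b := stdOrthonormalBasis ℂ V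
  let F : G → ℝ := fun y => ∑ j, ‖⟪(b j : H), π y g⟫_ℂ‖ ^ 2
  have hint := integrable_norm_inner_sq (μ := μ) hdπ hortho
  have hFint : Integrable F μ := integrable_finsetSum _ fun j _ => hint _ g
  have hF (y : G) : F y = ‖V.orthogonalProjectionOnto (π y g)‖ ^ 2 := b.sum_sq_norm_inner_coe _
  have htotal : ∫ y, F y ∂μ = Fintype.card ι * (dπ⁻¹ * ‖g‖ ^ 2) := by
    have hb (j) : ‖(b j : H)‖ = 1 := b.norm_eq_one j
    have hdim : Module.finrank ℂ V = Fintype.card ι :=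
      finrank_span_eq_card (linearIndependent_of_riesz_lower hA hu)
    simp [F, integral_finsetSum _ fun j _ => hint _ g, hortho, hb, hdim]
  rw [← htotal, ← integral_add_compl hE hFint]
  gcongr
  · calc ∫ y in E, F y ∂μ ≤ ∫ _ in E, ‖g‖ ^ 2 ∂μ :=
          setIntegral_mono_on hFint.integrableOn (integrableOn_const hEfin) hE fun y _ => by
            rw [hF, ← hπnorm y g]
            gcongr
            exact V.norm_orthogonalProjectionOnto_apply_le _
      _ = ‖g‖ ^ 2 * μ.real E := by rw [setIntegral_const, smul_eq_mul, mul_comm]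
  · calc ∫ y in Eᶜ, F y ∂μ ≤ ∫ y in Eᶜ, A⁻¹ * ∑ i, ‖⟪u i, π y g⟫_ℂ‖ ^ 2 ∂μ :=
          setIntegral_mono hFint.integrableOn
            ((integrable_finsetSum _ fun i _ => hint _ g).const_mul _).integrableOn fun y => by
              rw [hF]
              exact norm_orthogonalProjectionOnto_sq_le_of_riesz_lower hA hu le_rfl _
      _ = A⁻¹ * ∑ i, ∫ y in Eᶜ, ‖⟪u i, π y g⟫_ℂ‖ ^ 2 ∂μ := by
        rw [integral_const_mul, integral_finsetSum _ fun i _ => (hint _ g).integrableOn]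

theorem card_le_of_riesz_lower_of_tail
    (hπnorm : ∀ (x : G) (f : H), ‖π x f‖ = ‖f‖) (hdπ : 0 < dπ)
    (hortho : ∀ f h : H, ∫ x, ‖⟪f, π x h⟫_ℂ‖ ^ 2 ∂μ = dπ⁻¹ * ‖f‖ ^ 2 * ‖h‖ ^ 2) {g : H}
    {ι : Type*} [Fintype ι] {u : ι → H} {A : ℝ} (hA : 0 < A)
    (hu : ∀ c : ι → ℂ, A * ∑ i, ‖c i‖ ^ 2 ≤ ‖∑ i, c i • u i‖ ^ 2) (hAg : A ≤ ‖g‖ ^ 2)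
    {E : Set G} (hE : MeasurableSet E) (hEfin : μ E ≠ ⊤) {τ : ℝ} (hτ : 0 ≤ τ)
    (htail : ∀ i, ∫ y in Eᶜ, ‖⟪u i, π y g⟫_ℂ‖ ^ 2 ∂μ ≤ τ) (hη : dπ * τ / A ^ 2 ≤ 1 / 2) :
    (Fintype.card ι : ℝ) ≤ (1 + 2 * (dπ * τ / A ^ 2)) * (dπ * μ.real E) := by
  set n : ℝ := (Fintype.card ι : ℝ)
  have hg : 0 < ‖g‖ ^ 2 := hA.trans_le hAg
  have hsum : ∑ i, ∫ y in Eᶜ, ‖⟪u i, π y g⟫_ℂ‖ ^ 2 ∂μ ≤ n * τ := by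
    simpa [n] using Finset.sum_le_sum fun i (_ : i ∈ Finset.univ) => htail i
  have hcount := (card_mul_le_of_riesz_lower hπnorm hdπ.ne' hortho g hA hu hE hEfin).trans
    (add_le_add_right (mul_le_mul_of_nonneg_left hsum (inv_nonneg.2 hA.le)) _)
  have hcount' : n * ‖g‖ ^ 2 ≤ dπ * (‖g‖ ^ 2 * μ.real E) + dπ * A⁻¹ * (n * τ) := by
    calc n * ‖g‖ ^ 2 = dπ * (n * (dπ⁻¹ * ‖g‖ ^ 2)) := by field_simp
      _ ≤ dπ * (‖g‖ ^ 2 * μ.real E + A⁻¹ * (n * τ)) := by gcongr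
      _ = _ := by ring
  have hAg' : 1 ≤ A⁻¹ * ‖g‖ ^ 2 := by rwa [le_inv_mul_iff₀ hA, mul_one]
  have hη' : dπ * A⁻¹ * (n * τ) ≤ dπ * τ / A ^ 2 * n * ‖g‖ ^ 2 :=
    calc dπ * A⁻¹ * (n * τ) = dπ * τ * A⁻¹ * n * 1 := by ring
      _ ≤ dπ * τ * A⁻¹ * n * (A⁻¹ * ‖g‖ ^ 2) := by gcongr
      _ = dπ * τ / A ^ 2 * n * ‖g‖ ^ 2 := by ring
  have hn : n ≤ dπ * μ.real E + dπ * τ / A ^ 2 * n :=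
    le_of_mul_le_mul_right (by linarith) hg
  exact le_one_add_two_mul_of_le_add_mul (by positivity) (by positivity) hη hn

end SquareIntegrable

section ProjectiveRepresentation

variable {G H : Type*} [Group G] [NormedAddCommGroup H] [InnerProductSpace ℂ H]
  {π : G → H →L[ℂ] H}

theorem norm_inner_apply_apply_eq (hπnorm : ∀ (x : G) (f : H), ‖π x f‖ = ‖f‖)
    (hπproj : ∀ x y : G, ∃ c : ℂ, ‖c‖ = 1 ∧ (π x).comp (π y) = c • π (x * y))
    (l y : G) (f h : H) : ‖⟪π l f, π y h⟫_ℂ‖ = ‖⟪f, π (l⁻¹ * y) h⟫_ℂ‖ := by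
  obtain ⟨c, hc, hcomp⟩ := hπproj l (l⁻¹ * y)
  have happly : π l (π (l⁻¹ * y) h) = c • π y h := by
    simpa using congrArg (fun T : H →L[ℂ] H => T h) hcomp
  let L : H →ₗᵢ[ℂ] H := ⟨(π l).toLinearMap, hπnorm l⟩
  calc ‖⟪π l f, π y h⟫_ℂ‖ = ‖c‖ * ‖⟪π l f, π y h⟫_ℂ‖ := by rw [hc, one_mul]
    _ = ‖⟪L f, L (π (l⁻¹ * y) h)⟫_ℂ‖ := by
      simp only [L, LinearIsometry.coe_mk, ContinuousLinearMap.coe_coe, happly,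
        inner_smul_right, norm_mul]
    _ = ‖⟪f, π (l⁻¹ * y) h⟫_ℂ‖ := by rw [L.inner_map_map]

theorem sq_norm_inner_le_sq_iSup (hπnorm : ∀ (x : G) (f : H), ‖π x f‖ = ‖f‖)
    {p : G → Prop} (hp : p 1) (g : H) (z : G) :
    ‖⟪g, π z g⟫_ℂ‖ ^ 2 ≤ (⨆ w : {y : G // p y}, ‖⟪g, π (z * w) g⟫_ℂ‖) ^ 2 := by
  have hbdd : BddAbove (Set.range fun w : {y : G // p y} => ‖⟪g, π (z * w) g⟫_ℂ‖) := by
    refine ⟨‖g‖ * ‖g‖, ?_⟩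
    rintro _ ⟨w, rfl⟩
    exact (norm_inner_le_norm _ _).trans_eq (by rw [hπnorm])
  gcongr
  exact le_ciSup_of_le hbdd ⟨1, hp⟩ (by simp)

end ProjectiveRepresentation

section InvariantMetric

variable {G : Type*} [Group G] {d : G → G → ℝ}

theorem metric_mul_one_le (hinv : ∀ x y z : G, d (z * x) (z * y) = d x y)
    (htri : ∀ x y z : G, d x z ≤ d x y + d y z) (a b : G) : d (a * b) 1 ≤ d a 1 + d b 1 := by
  calc d (a * b) 1 ≤ d (a * b) (a * 1) + d a 1 := by rw [mul_one]; exact htri _ _ _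
    _ = d a 1 + d b 1 := by rw [hinv, add_comm]

theorem closure_setOf_lt_subset [TopologicalSpace G] [ContinuousMul G]
    (hinv : ∀ x y z : G, d (z * x) (z * y) = d x y) (htri : ∀ x y z : G, d x z ≤ d x y + d y z)
    (hsymm : ∀ x y : G, d x y = d y x) {r₀ : ℝ} (hr₀ : {x : G | d x 1 < r₀} ∈ 𝓝 1) (t : ℝ) :
    closure {y : G | d y 1 < t} ⊆ {y : G | d y 1 < t + r₀} := by
  intro y hy
  have hU : y • {x : G | d x 1 < r₀} ∈ 𝓝 y := by simpa using smul_mem_nhds_smul y hr₀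
  obtain ⟨_, ⟨w, hw, rfl⟩, hyw⟩ := mem_closure_iff_nhds.1 hy _ hU
  have hw' : d w⁻¹ 1 = d w 1 := by rw [← hinv w⁻¹ 1 w, mul_inv_cancel, mul_one, hsymm]
  calc d y 1 = d ((y * w) * w⁻¹) 1 := by rw [mul_inv_cancel_right]
    _ ≤ d (y * w) 1 + d w⁻¹ 1 := metric_mul_one_le hinv htri _ _
    _ < t + r₀ := by rw [hw']; exact add_lt_add hyw hw

theorem measure_real_smul_closure_le [TopologicalSpace G] [ContinuousMul G]
    [MeasurableSpace G] [MeasurableMul G] {μ : Measure G} [μ.IsMulLeftInvariant]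
    (hinv : ∀ x y z : G, d (z * x) (z * y) = d x y)
    (htri : ∀ x y z : G, d x z ≤ d x y + d y z) (hsymm : ∀ x y : G, d x y = d y x)
    {r₀ : ℝ} (hr₀ : 0 < r₀) (hr₀nbhd : {x : G | d x 1 < r₀} ∈ 𝓝 1) {c δ : ℝ}
    (hAD : ∀ r : ℝ, 1 ≤ r → ∀ s : ℝ, 0 < s → s ≤ r →
      μ ({x : G | d x 1 < r} \ {x : G | d x 1 < r - s})
        ≤ ENNReal.ofReal (c * (s / r) ^ δ) * μ {x : G | d x 1 < r})
    (hfin : ∀ t, μ (closure {y : G | d y 1 < t}) ≠ ⊤) {ρ σ : ℝ} (hρ : 1 ≤ ρ) (hσ : 0 ≤ σ)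
    (hθ0 : 0 ≤ c * ((σ + 2 * r₀) / (ρ + σ + 2 * r₀)) ^ δ)
    (hθ : c * ((σ + 2 * r₀) / (ρ + σ + 2 * r₀)) ^ δ ≤ 1 / 2) (x : G) :
    μ.real (x • closure {y : G | d y 1 < ρ + r₀ + σ})
      ≤ (1 + 2 * (c * ((σ + 2 * r₀) / (ρ + σ + 2 * r₀)) ^ δ))
        * μ.real (closure {y : G | d y 1 < ρ}) := by
  have hball (t : ℝ) : μ {y : G | d y 1 < t} ≠ ⊤ :=
    measure_ne_top_of_subset subset_closure (hfin t)
  have hannulus := measure_real_le_of_annularDecay hAD (r := ρ + σ + 2 * r₀) (s := σ + 2 * r₀)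
    (by linarith) (by positivity) (by linarith) (hball _) hθ0 hθ
  rw [show ρ + σ + 2 * r₀ - (σ + 2 * r₀) = ρ by ring] at hannulus
  calc μ.real (x • closure {y : G | d y 1 < ρ + r₀ + σ})
      = μ.real (closure {y : G | d y 1 < ρ + r₀ + σ}) := by simp [Measure.real, measure_smul]
    _ ≤ μ.real {y : G | d y 1 < ρ + σ + 2 * r₀} :=
        measureReal_mono ((closure_setOf_lt_subset hinv htri hsymm hr₀nbhd _).trans
          fun y (hy : d y 1 < ρ + r₀ + σ + r₀) => show d y 1 < ρ + σ + 2 * r₀ by linarith)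
          (hball _)
    _ ≤ _ := hannulus
    _ ≤ _ := by gcongr; exacts [hfin ρ, subset_closure]

end InvariantMetric

/-- Finiteness of this integral is the condition `g ∈ D_{π,w_α}` with `Q = B_{r₀}`. -/
noncomputable def weightedLocalMaxIntegral {G H : Type*} [Group G] [MeasurableSpace G]
    [NormedAddCommGroup H] [InnerProductSpace ℂ H] (μ : Measure G) (π : G → H →L[ℂ] H)
    (d : G → G → ℝ) (r₀ α : ℝ) (g : H) : ENNReal :=
  ∫⁻ x, ENNReal.ofReal
    ((⨆ z : {y : G // d y 1 < r₀}, ‖⟪g, π (x * (z : G)) g⟫_ℂ‖) ^ 2 * (1 + d x 1) ^ α) ∂μ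

theorem setIntegral_compl_smul_closure_le {G H : Type*} [Group G] [TopologicalSpace G]
    [IsTopologicalGroup G] [MeasurableSpace G] [BorelSpace G]
    [NormedAddCommGroup H] [InnerProductSpace ℂ H]
    {μ : Measure G} [μ.IsMulLeftInvariant] {π : G → H →L[ℂ] H}
    (hπnorm : ∀ (x : G) (f : H), ‖π x f‖ = ‖f‖)
    (hπproj : ∀ x y : G, ∃ c : ℂ, ‖c‖ = 1 ∧ (π x).comp (π y) = c • π (x * y))
    {dπ : ℝ} (hdπ : dπ ≠ 0)
    (hortho : ∀ f h : H, ∫ x, ‖⟪f, π x h⟫_ℂ‖ ^ 2 ∂μ = dπ⁻¹ * ‖f‖ ^ 2 * ‖h‖ ^ 2)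
    {d : G → G → ℝ} (hinv : ∀ x y z : G, d (z * x) (z * y) = d x y)
    (htri : ∀ x y z : G, d x z ≤ d x y + d y z) (hsymm : ∀ x y : G, d x y = d y x)
    {r₀ : ℝ} (hr₀ : {x : G | d x 1 < r₀} ∈ 𝓝 1) {α : ℝ} (hα : 0 ≤ α) {g : H}
    (hgD : weightedLocalMaxIntegral μ π d r₀ α g < ⊤)
    {σ : ℝ} (hσ : 0 ≤ σ) {ρ : ℝ} {x l : G} (hl : l ∈ x • closure {y : G | d y 1 < ρ}) :
    ∫ y in (x • closure {y : G | d y 1 < ρ + r₀ + σ})ᶜ, ‖⟪π l g, π y g⟫_ℂ‖ ^ 2 ∂μ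
      ≤ (1 + σ) ^ (-α) * (weightedLocalMaxIntegral μ π d r₀ α g).toReal := by
  set E := x • closure {y : G | d y 1 < ρ + r₀ + σ}
  have hE : MeasurableSet E := (isClosed_closure.smul x).measurableSet
  have hfar : ∀ z ∈ (l * ·) ⁻¹' Eᶜ, σ ≤ d z 1 := by
    intro z hz
    by_contra! hlt
    obtain ⟨k, hk, rfl⟩ := hl
    refine hz ⟨k * z, subset_closure ?_, by simp [mul_assoc]⟩
    calc d (k * z) 1 ≤ d k 1 + d z 1 := metric_mul_one_le hinv htri k z
      _ < ρ + r₀ + σ := add_lt_add (closure_setOf_lt_subset hinv htri hsymm hr₀ ρ hk) hlt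
  rw [← (measurePreserving_mul_left μ l).setIntegral_preimage_emb
    (MeasurableEquiv.mulLeft l).measurableEmbedding (fun y => ‖⟪π l g, π y g⟫_ℂ‖ ^ 2)]
  simp only [norm_inner_apply_apply_eq hπnorm hπproj, inv_mul_cancel_left]
  exact setIntegral_le_rpow_neg_mul_lintegral (measurable_const_mul l hE.compl)
    (integrable_norm_inner_sq hdπ hortho g g).aestronglyMeasurable (fun _ => sq_nonneg _) hσ hα
    (fun z _ => sq_norm_inner_le_sq_iSup hπnorm (mem_of_mem_nhds hr₀) g z) hfar hgD.ne

theorem card_le_of_riesz_of_forall_mem_smul_closure {G H : Type*} [Group G]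
    [TopologicalSpace G] [IsTopologicalGroup G] [MeasurableSpace G] [BorelSpace G]
    [NormedAddCommGroup H] [InnerProductSpace ℂ H] {μ : Measure G} [μ.IsMulLeftInvariant]
    {π : G → H →L[ℂ] H} (hπnorm : ∀ (x : G) (f : H), ‖π x f‖ = ‖f‖)
    (hπproj : ∀ x y : G, ∃ c : ℂ, ‖c‖ = 1 ∧ (π x).comp (π y) = c • π (x * y))
    {dπ : ℝ} (hdπ : 0 < dπ)
    (hortho : ∀ f h : H, ∫ x, ‖⟪f, π x h⟫_ℂ‖ ^ 2 ∂μ = dπ⁻¹ * ‖f‖ ^ 2 * ‖h‖ ^ 2)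
    {d : G → G → ℝ} (hinv : ∀ x y z : G, d (z * x) (z * y) = d x y)
    (htri : ∀ x y z : G, d x z ≤ d x y + d y z) (hsymm : ∀ x y : G, d x y = d y x)
    {δ c : ℝ} (hδ : 0 < δ) (hc : 0 ≤ c)
    (hAD : ∀ r : ℝ, 1 ≤ r → ∀ s : ℝ, 0 < s → s ≤ r →
      μ ({x : G | d x 1 < r} \ {x : G | d x 1 < r - s})
        ≤ ENNReal.ofReal (c * (s / r) ^ δ) * μ {x : G | d x 1 < r})
    {r₀ : ℝ} (hr₀ : 0 < r₀) (hr₀nbhd : {x : G | d x 1 < r₀} ∈ 𝓝 1)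
    (hfin : ∀ t, μ (closure {y : G | d y 1 < t}) ≠ ⊤)
    {α : ℝ} (hα : 0 < α) {g : H} (hgD : weightedLocalMaxIntegral μ π d r₀ α g < ⊤)
    {A : ℝ} (hA : 0 < A) {ι : Type*} [Fintype ι] {l : ι → G}
    (hriesz : ∀ c : ι → ℂ, A * ∑ i, ‖c i‖ ^ 2 ≤ ‖∑ i, c i • π (l i) g‖ ^ 2)
    {x : G} {ρ : ℝ} (hl : ∀ i, l i ∈ x • closure {y : G | d y 1 < ρ}) (hρ : 1 ≤ ρ)
    {β C₁ C₂ : ℝ} (hβ : β = α * δ / (δ + α)) (hC₁ : c * (1 + 2 * r₀) ^ δ ≤ C₁)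
    (hC₂ : dπ * (weightedLocalMaxIntegral μ π d r₀ α g).toReal / A ^ 2 ≤ C₂)
    (hC₁ρ : C₁ * ρ ^ (-β) ≤ 1 / 2) (hC₂ρ : C₂ * ρ ^ (-β) ≤ 1 / 2) :
    (Fintype.card ι : ℝ)
      ≤ dπ * (1 + (4 * C₁ + 2 * C₂) * ρ ^ (-β)) * μ.real (closure {y : G | d y 1 < ρ}) := by
  subst hβ
  set M := (weightedLocalMaxIntegral μ π d r₀ α g).toReal
  set K := closure {y : G | d y 1 < ρ}
  set P := ρ ^ (-(α * δ / (δ + α)))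
  have hP : 0 ≤ P := by positivity
  have hC₁0 : 0 ≤ C₁ := le_trans (by positivity) hC₁
  have hC₂0 : 0 ≤ C₂ := le_trans (by positivity) hC₂
  rcases isEmpty_or_nonempty ι with hι | ⟨⟨i₀⟩⟩
  · simp only [Fintype.card_eq_zero, Nat.cast_zero]
    positivity
  have hAg : A ≤ ‖g‖ ^ 2 := hπnorm (l i₀) g ▸ le_norm_sq_of_riesz_lower hriesz i₀
  set σ := ρ ^ (δ / (δ + α))
  have hσ : 0 < σ := by positivity
  have hθ : c * ((σ + 2 * r₀) / (ρ + σ + 2 * r₀)) ^ δ ≤ C₁ * P :=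
    calc _ ≤ c * ((1 + 2 * r₀) ^ δ * P) := by
          gcongr; exact annulus_ratio_rpow_le hρ hα hδ (by positivity)
      _ ≤ C₁ * P := by rw [← mul_assoc]; gcongr
  have hη : dπ * ((1 + σ) ^ (-α) * M) / A ^ 2 ≤ C₂ * P :=
    calc _ = dπ * M / A ^ 2 * (1 + σ) ^ (-α) := by ring
      _ ≤ C₂ * P := by gcongr; exact one_add_rpow_rpow_neg_le (by positivity) hα.le
  set E := x • closure {y : G | d y 1 < ρ + r₀ + σ}
  have hcount := card_le_of_riesz_lower_of_tail hπnorm hdπ hortho hA hriesz hAg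
    (isClosed_closure.smul x).measurableSet (by simpa [E, measure_smul] using hfin _)
    (by positivity)
    (fun i => setIntegral_compl_smul_closure_le hπnorm hπproj hdπ.ne' hortho hinv htri hsymm
      hr₀nbhd hα.le hgD hσ.le (hl i)) (hη.trans hC₂ρ)
  have hE : μ.real E ≤ (1 + 2 * (C₁ * P)) * μ.real K :=
    (measure_real_smul_closure_le hinv htri hsymm hr₀ hr₀nbhd hAD hfin hρ hσ.le
      (by positivity) (hθ.trans hC₁ρ) x).trans (by gcongr)
  calc (Fintype.card ι : ℝ)
      ≤ (1 + 2 * (dπ * ((1 + σ) ^ (-α) * M) / A ^ 2)) * (dπ * μ.real E) := hcount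
    _ ≤ (1 + 2 * (C₂ * P)) * (dπ * ((1 + 2 * (C₁ * P)) * μ.real K)) := by gcongr
    _ = dπ * ((1 + 2 * (C₂ * P)) * (1 + 2 * (C₁ * P))) * μ.real K := by ring
    _ ≤ dπ * (1 + (4 * C₁ + 2 * C₂) * P) * μ.real K := by
      gcongr; nlinarith [mul_nonneg hC₁0 hP]

theorem coherent_riesz_counting_polynomial_growth_general {G H : Type*} [Group G]
    [TopologicalSpace G] [IsTopologicalGroup G]
    [MeasurableSpace G] [BorelSpace G]
    [NormedAddCommGroup H] [InnerProductSpace ℂ H]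
    (μ : Measure G) [μ.IsHaarMeasure]
    (π : G → H →L[ℂ] H)
    (hπnorm : ∀ (x : G) (f : H), ‖π x f‖ = ‖f‖)
    (hπproj : ∀ x y : G, ∃ c : ℂ, ‖c‖ = 1 ∧ (π x).comp (π y) = c • π (x * y))
    (dπ : ℝ) (hdπ : 0 < dπ)
    (hortho : ∀ f h : H, ∫ x, ‖(inner ℂ f (π x h) : ℂ)‖ ^ 2 ∂μ = dπ⁻¹ * ‖f‖ ^ 2 * ‖h‖ ^ 2)
    -- a periodic metric `d` on `G` with `δ`-annular decay and polynomial growth `D`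
    (d : G → G → ℝ)
    (hinv : ∀ x y z : G, d (z * x) (z * y) = d x y)
    (htri : ∀ x y z : G, d x z ≤ d x y + d y z)
    (hsymm : ∀ x y : G, d x y = d y x)
    (δ : ℝ) (hδ : δ ∈ Set.Ioc (0 : ℝ) 1)
    (c : ℝ) (hc : 0 < c)
    (hAD : ∀ r : ℝ, 1 ≤ r → ∀ s : ℝ, 0 < s → s ≤ r →
      μ ({x : G | d x 1 < r} \ {x : G | d x 1 < r - s})
        ≤ ENNReal.ofReal (c * (s / r) ^ δ) * μ {x : G | d x 1 < r})
    -- radii and the associated strong Følner exhaustion sequence of closed balls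
    (r₀ : ℝ) (hr₀ : 0 < r₀) (hr₀nbhd : {x : G | d x 1 < r₀} ∈ nhds 1)
    (r : ℕ → ℝ) (hrsep : ∀ n, r₀ < r (n + 1) - r n)
    (hKcpt : ∀ n, IsCompact (closure {x : G | d x 1 < r n}))
    -- `g ∈ D_{π, w_α}` with `Q = B_{r₀}`
    (α : ℝ) (hα : 0 < α)
    (g : H)
    (hgD : ∫⁻ x, ENNReal.ofReal
        ((⨆ z : {y : G // d y 1 < r₀}, ‖(inner ℂ g (π (x * (z : G)) g) : ℂ)‖) ^ 2
          * (1 + d x 1) ^ α) ∂μ < ⊤)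
    (Λ : Set G) (A B : ℝ) (hA : 0 < A)
    (hriesz : ∀ cf : ↥Λ →₀ ℂ,
      A * ∑ l ∈ cf.support, ‖cf l‖ ^ 2
          ≤ ‖∑ l ∈ cf.support, cf l • π (l : G) g‖ ^ 2 ∧
        ‖∑ l ∈ cf.support, cf l • π (l : G) g‖ ^ 2
          ≤ B * ∑ l ∈ cf.support, ‖cf l‖ ^ 2) :
    ∃ C > 0, ∃ N : ℕ, ∀ n ≥ N, ∀ x : G,
      (Λ ∩ x • closure {y : G | d y 1 < r n}).Finite ∧
      ((Λ ∩ x • closure {y : G | d y 1 < r n}).ncard : ℝ)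
        ≤ dπ * (1 + C * r n ^ (-(α * δ / (δ + α))))
            * (μ (closure {y : G | d y 1 < r n})).toReal := by
  obtain ⟨hδ0, -⟩ := hδ
  set β := α * δ / (δ + α) with hβ
  set C₁ := c * (1 + 2 * r₀) ^ δ
  set C₂ := dπ * (weightedLocalMaxIntegral μ π d r₀ α g).toReal / A ^ 2
  have hr := tendsto_atTop_of_lt_sub hr₀ hrsep
  have hP : Tendsto (fun n => r n ^ (-β)) atTop (𝓝 0) :=
    (tendsto_rpow_neg_atTop (by positivity)).comp hr
  have hsmall (C : ℝ) : ∀ᶠ n in atTop, C * r n ^ (-β) ≤ 1 / 2 := by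
    simpa using (hP.const_mul C).eventually (ge_mem_nhds (by norm_num : (C * 0 : ℝ) < 1 / 2))
  obtain ⟨N, hN⟩ :=
    eventually_atTop.1 (((hr.eventually_ge_atTop 1).and (hsmall C₁)).and (hsmall C₂))
  refine ⟨4 * C₁ + 2 * C₂, by positivity, N, fun n hn x => ?_⟩
  obtain ⟨⟨hρ, hC₁ρ⟩, hC₂ρ⟩ := hN n hn
  refine Set.finite_and_ncard_le_of_forall_finset_card_le fun T hT => ?_
  have hriesz_T := riesz_lower_comp_injective (fun cf => (hriesz cf).1)
    (j := fun i : T => (⟨i, (hT i.2).1⟩ : Λ))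
    fun a b h => Subtype.ext (congrArg (Subtype.val : Λ → G) h)
  have hcard := card_le_of_riesz_of_forall_mem_smul_closure hπnorm hπproj hdπ hortho hinv htri
    hsymm hδ0 hc.le hAD hr₀ hr₀nbhd (measure_closure_ne_top_of_tendsto hr hKcpt) hα hgD hA
    hriesz_T (fun i => (hT i.2).2) hρ hβ le_rfl le_rfl hC₁ρ hC₂ρ
  rwa [Fintype.card_coe] at hcard

/-- counting-function upper bound for coherent Riesz sequences on a group
of polynomial growth, over a strong Følner exhaustion sequence of closed metric balls:
`sup_x #(Λ ∩ x·cl(B_{rₙ})) ≤ d_π (1 + C rₙ^{−αδ/(δ+α)}) μ(cl(B_{rₙ}))` for `n ≫ 1`. -/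
theorem coherent_riesz_counting_polynomial_growth {G H : Type*} [Group G]
    [TopologicalSpace G] [IsTopologicalGroup G] [LocallyCompactSpace G]
    [SecondCountableTopology G] [MeasurableSpace G] [BorelSpace G]
    [NormedAddCommGroup H] [InnerProductSpace ℂ H] [CompleteSpace H]
    (μ : Measure G) [μ.IsHaarMeasure] [μ.IsMulRightInvariant]
    (π : G → H →L[ℂ] H)
    (hπnorm : ∀ (x : G) (f : H), ‖π x f‖ = ‖f‖)
    (hπproj : ∀ x y : G, ∃ c : ℂ, ‖c‖ = 1 ∧ (π x).comp (π y) = c • π (x * y))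
    (hπmeas : ∀ f h : H, Measurable fun x => (inner ℂ f (π x h) : ℂ))
    (hπirr : ∀ V : Submodule ℂ H, (∀ x : G, ∀ v ∈ V, π x v ∈ V) → V ≠ ⊥ → V = ⊤)
    (dπ : ℝ) (hdπ : 0 < dπ)
    (hortho : ∀ f h : H, ∫ x, ‖(inner ℂ f (π x h) : ℂ)‖ ^ 2 ∂μ = dπ⁻¹ * ‖f‖ ^ 2 * ‖h‖ ^ 2)
    -- a periodic metric `d` on `G` with `δ`-annular decay and polynomial growth `D`
    (d : G → G → ℝ)
    (hinv : ∀ x y z : G, d (z * x) (z * y) = d x y)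
    (htri : ∀ x y z : G, d x z ≤ d x y + d y z)
    (hsymm : ∀ x y : G, d x y = d y x)
    (hnonneg : ∀ x y : G, 0 ≤ d x y)
    (D : ℝ) (hD : 0 < D)
    (δ : ℝ) (hδ : δ ∈ Set.Ioc (0 : ℝ) 1)
    (c : ℝ) (hc : 0 < c)
    (hAD : ∀ r : ℝ, 1 ≤ r → ∀ s : ℝ, 0 < s → s ≤ r →
      μ ({x : G | d x 1 < r} \ {x : G | d x 1 < r - s})
        ≤ ENNReal.ofReal (c * (s / r) ^ δ) * μ {x : G | d x 1 < r})
    (c₁ c₂ : ℝ) (hc₁ : 0 < c₁) (hc₂ : 0 < c₂) (R₀ : ℝ) (hR₀ : 1 ≤ R₀)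
    (hgrowth : ∀ r : ℝ, R₀ ≤ r →
      ENNReal.ofReal (c₁ * r ^ D) ≤ μ {x : G | d x 1 < r} ∧
        μ {x : G | d x 1 < r} ≤ ENNReal.ofReal (c₂ * r ^ D))
    -- radii and the associated strong Følner exhaustion sequence of closed balls
    (r₀ : ℝ) (hr₀ : 0 < r₀) (hr₀nbhd : {x : G | d x 1 < r₀} ∈ nhds 1)
    (r : ℕ → ℝ) (hrpos : ∀ n, 0 < r n) (hrsep : ∀ n, r₀ < r (n + 1) - r n)
    (hKcpt : ∀ n, IsCompact (closure {x : G | d x 1 < r n}))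
    (hKpos : ∀ n, 0 < μ (closure {x : G | d x 1 < r n}))
    (hK1 : ∀ n, (1 : G) ∈ closure {x : G | d x 1 < r n})
    (hKmono : ∀ n, closure {x : G | d x 1 < r n}
      ⊆ interior (closure {x : G | d x 1 < r (n + 1)}))
    (hKexh : (⋃ n, closure {x : G | d x 1 < r n}) = Set.univ)
    (hKfolner : ∀ C : Set G, IsCompact C →
      Tendsto (fun n => μ (closure {x : G | d x 1 < r n} * C
          ∩ (closure {x : G | d x 1 < r n})ᶜ * C)
        / μ (closure {x : G | d x 1 < r n})) atTop (nhds 0))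
    -- `g ∈ D_{π, w_α}` with `Q = B_{r₀}`
    (α : ℝ) (hα : 0 < α)
    (g : H)
    (hgD : ∫⁻ x, ENNReal.ofReal
        ((⨆ z : {y : G // d y 1 < r₀}, ‖(inner ℂ g (π (x * (z : G)) g) : ℂ)‖) ^ 2
          * (1 + d x 1) ^ α) ∂μ < ⊤)
    (Λ : Set G) (A B : ℝ) (hA : 0 < A) (hAB : A ≤ B)
    (hriesz : ∀ cf : ↥Λ →₀ ℂ,
      A * ∑ l ∈ cf.support, ‖cf l‖ ^ 2
          ≤ ‖∑ l ∈ cf.support, cf l • π (l : G) g‖ ^ 2 ∧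
        ‖∑ l ∈ cf.support, cf l • π (l : G) g‖ ^ 2
          ≤ B * ∑ l ∈ cf.support, ‖cf l‖ ^ 2) :
    ∃ C > 0, ∃ N : ℕ, ∀ n ≥ N, ∀ x : G,
      (Λ ∩ x • closure {y : G | d y 1 < r n}).Finite ∧
      ((Λ ∩ x • closure {y : G | d y 1 < r n}).ncard : ℝ)
        ≤ dπ * (1 + C * r n ^ (-(α * δ / (δ + α))))
            * (μ (closure {y : G | d y 1 < r n})).toReal :=
  coherent_riesz_counting_polynomial_growth_general μ π hπnorm hπproj dπ hdπ hortho d hinv htri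
    hsymm δ hδ c hc hAD r₀ hr₀ hr₀nbhd r hrsep hKcpt α hα g hgD Λ A B hA hriesz
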